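/- arXiv:1607.05152 — 2 statements merged into one kernel-verified Lean document; each statement's English description precedes it below -/
import Mathlib

section
/- For real numbers t > 0, α with Re(α) > n+1, and d ≥ 0, the integral (1/2t) ∫_{-∞}^{∞} (4πt)^{-1/2} e^{-s²/4t} · C(α) · sign(s) · (s² - d²)_+^{(α-n-1)/2} · s ds equals (4πt)^{-n/2} e^{-d²/4t} · t^{(α-2)/2} / Γ(α/2), where C(α) = 2^{1-α} π^{(1-n)/2} / (Γ(α/2) Γ((α-n+1)/2)) and (x)_+ denotes the positive part. -/
open Real MeasureTheory Set

/-!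
Since `sign s * s = |s|`, the integrand is even in `s`, and the substitution `u = s²` turns the
integral into `∫_{u>0} e^{-u/4t} (u - d²)_+^β du` with `β = (α - n - 1)/2`. Shifting `u` by `d²`
leaves `e^{-d²/4t} (4t)^{β+1} Γ(β+1)`, and `Γ(β+1) = Γ((α-n+1)/2)` cancels against the
normalising constant `C(α)`.
-/

lemma Real.sign_mul_self_eq_abs (s : ℝ) : Real.sign s * s = |s| := by
  rcases lt_trichotomy s 0 with h | rfl | h
  · rw [sign_of_neg h, abs_of_neg h, neg_one_mul]
  · simp
  · rw [sign_of_pos h, abs_of_pos h, one_mul]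

theorem integral_abs_mul_comp_sq (f : ℝ → ℝ) :
    ∫ s, |s| * f (s ^ 2) = ∫ u in Ioi 0, f u := by
  rw [show (fun s => |s| * f (s ^ 2)) = fun s => (fun x => x * f (x ^ 2)) |s| from
    funext fun s => by simp only [sq_abs]]
  rw [integral_comp_abs (f := fun x => x * f (x ^ 2)), ← integral_comp_rpow_Ioi f two_ne_zero,
    ← integral_const_mul]
  refine setIntegral_congr_fun measurableSet_Ioi fun x _ => ?_
  norm_num [rpow_two]
  ring

-- `max v 0 ^ 0 = 1` for `v ≤ 0`, hence `β ≠ 0`.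
theorem integral_exp_neg_div_mul_max_rpow {a β : ℝ} (ha : 0 < a) (hβ₀ : β ≠ 0) (hβ : -1 < β) :
    ∫ v, exp (-v / a) * max v 0 ^ β = a ^ (β + 1) * Gamma (β + 1) := by
  rw [← setIntegral_eq_integral_of_forall_compl_eq_zero (s := Ioi 0) fun v hv => by
    rw [max_eq_right (notMem_Ioi.mp hv), zero_rpow hβ₀, mul_zero]]
  calc ∫ v in Ioi 0, exp (-v / a) * max v 0 ^ β
      = ∫ v in Ioi 0, v ^ ((β + 1) - 1) * exp (-(1 / a * v)) :=
        setIntegral_congr_fun measurableSet_Ioi fun v hv => by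
          rw [max_eq_left (le_of_lt hv), add_sub_cancel_right, mul_comm, one_div_mul_eq_div, neg_div]
    _ = a ^ (β + 1) * Gamma (β + 1) := by
        rw [integral_rpow_mul_exp_neg_mul_Ioi (by linarith) (by positivity), one_div_one_div]

theorem integral_Ioi_exp_neg_div_mul_max_sub_rpow {a β c : ℝ} (ha : 0 < a) (hβ₀ : β ≠ 0)
    (hβ : -1 < β) (hc : 0 ≤ c) :
    ∫ u in Ioi 0, exp (-u / a) * max (u - c) 0 ^ β
      = exp (-c / a) * (a ^ (β + 1) * Gamma (β + 1)) := by
  rw [setIntegral_eq_integral_of_forall_compl_eq_zero fun u hu => by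
    rw [max_eq_right (by linarith [notMem_Ioi.mp hu]), zero_rpow hβ₀, mul_zero]]
  have hsplit : ∀ u, exp (-u / a) * max (u - c) 0 ^ β
      = exp (-c / a) * (exp (-(u - c) / a) * max (u - c) 0 ^ β) := fun u => by
    rw [← mul_assoc, ← exp_add]; ring_nf
  simp_rw [hsplit]
  rw [integral_const_mul, integral_sub_right_eq_self (fun v => exp (-v / a) * max v 0 ^ β) c,
    integral_exp_neg_div_mul_max_rpow ha hβ₀ hβ]

lemma riesz_heat_constant_eq (ν : ℝ) {t : ℝ} (ht : 0 < t) (α : ℝ) :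
    (4 * π * t) ^ (-(1 : ℝ) / 2) * 2 ^ (1 - α) * π ^ ((1 - ν) / 2) * (4 * t) ^ ((α - ν + 1) / 2)
      = 2 * t * ((4 * π * t) ^ (-ν / 2) * t ^ ((α - 2) / 2)) := by
  have hlog4 : log 4 = 2 * log 2 := by
    rw [show (4 : ℝ) = 2 ^ 2 by norm_num, log_pow, Nat.cast_ofNat]
  have h4πt : 0 < 4 * π * t := by positivity
  have h4t : 0 < 4 * t := by positivity
  rw [← exp_log (by positivity : 0 < 2 * t), rpow_def_of_pos h4πt, rpow_def_of_pos h4πt,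
    rpow_def_of_pos two_pos, rpow_def_of_pos pi_pos, rpow_def_of_pos h4t, rpow_def_of_pos ht]
  simp only [← exp_add]
  congr 1
  rw [log_mul (by positivity) ht.ne', log_mul (by positivity) ht.ne', log_mul (by positivity) ht.ne',
    log_mul four_ne_zero pi_ne_zero, hlog4]
  ring

theorem riesz_gaussian_integral_general (n : ℕ) (t α d : ℝ) (ht : 0 < t)
    (hα : (n : ℝ) + 1 < α) :
    (1 / (2 * t)) * ∫ s : ℝ,
        (4 * π * t) ^ (-(1 : ℝ) / 2) * Real.exp (-s ^ 2 / (4 * t)) *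
        (2 ^ (1 - α) * π ^ ((1 - (n : ℝ)) / 2) /
          (Real.Gamma (α / 2) * Real.Gamma ((α - n + 1) / 2))) *
        Real.sign s * (max (s ^ 2 - d ^ 2) 0) ^ ((α - n - 1) / 2) * s
    = (4 * π * t) ^ (-(n : ℝ) / 2) * Real.exp (-d ^ 2 / (4 * t)) *
        t ^ ((α - 2) / 2) / Real.Gamma (α / 2) := by
  set C := 2 ^ (1 - α) * π ^ ((1 - (n : ℝ)) / 2) /
    (Gamma (α / 2) * Gamma ((α - n + 1) / 2))
  set β := (α - n - 1) / 2 with hβ_def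
  have hβ : 0 < β := by rw [hβ_def]; linarith
  have hβ_succ : β + 1 = (α - n + 1) / 2 := by ring
  have hintegrand : ∀ s : ℝ,
      (4 * π * t) ^ (-(1 : ℝ) / 2) * exp (-s ^ 2 / (4 * t)) * C * Real.sign s *
        max (s ^ 2 - d ^ 2) 0 ^ β * s
      = (4 * π * t) ^ (-(1 : ℝ) / 2) * C *
        (|s| * (exp (-s ^ 2 / (4 * t)) * max (s ^ 2 - d ^ 2) 0 ^ β)) := fun s => by
    rw [← Real.sign_mul_self_eq_abs]; ring
  simp only [hintegrand]
  rw [integral_const_mul, integral_abs_mul_comp_sq fun u => exp (-u / (4 * t)) * max (u - d ^ 2) 0 ^ β,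
    integral_Ioi_exp_neg_div_mul_max_sub_rpow (by positivity) hβ.ne' (by linarith) (sq_nonneg d),
    hβ_succ]
  have hΓ : Gamma ((α - n + 1) / 2) ≠ 0 := (Gamma_pos_of_pos (by linarith)).ne'
  calc _ = (4 * π * t) ^ (-(1 : ℝ) / 2) * 2 ^ (1 - α) * π ^ ((1 - (n : ℝ)) / 2) *
          (4 * t) ^ ((α - n + 1) / 2) / (2 * t) * exp (-d ^ 2 / (4 * t)) / Gamma (α / 2) *
          (Gamma ((α - n + 1) / 2) / Gamma ((α - n + 1) / 2)) := by ring
    _ = _ := by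
      rw [div_self hΓ, mul_one, riesz_heat_constant_eq n ht α, mul_div_cancel_left₀ _ (by positivity)]
      ring

/-- The Gaussian transmutation integral of the Riesz distribution yields the
Euclidean heat kernel times `t^((α-2)/2)/Γ(α/2)`. -/
theorem riesz_gaussian_integral (n : ℕ) (t α d : ℝ) (ht : 0 < t)
    (hα : (n : ℝ) + 1 < α) (hd : 0 ≤ d) :
    (1 / (2 * t)) * ∫ s : ℝ,
        (4 * π * t) ^ (-(1 : ℝ) / 2) * Real.exp (-s ^ 2 / (4 * t)) *
        (2 ^ (1 - α) * π ^ ((1 - (n : ℝ)) / 2) /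
          (Real.Gamma (α / 2) * Real.Gamma ((α - n + 1) / 2))) *
        Real.sign s * (max (s ^ 2 - d ^ 2) 0) ^ ((α - n - 1) / 2) * s
    = (4 * π * t) ^ (-(n : ℝ) / 2) * Real.exp (-d ^ 2 / (4 * t)) *
        t ^ ((α - 2) / 2) / Real.Gamma (α / 2) :=
  riesz_gaussian_integral_general n t α d ht hα
end

section
/- Let A be a self-adjoint operator on a Hilbert space with spectrum bounded below by ω ∈ ℝ. Then for all u, v in the Hilbert space and t > 0, ∫_{-∞}^{∞} (4πt)^{-1/2} e^{-s²/4t} ⟨u, g_s'(A) v⟩ ds = ⟨u, e^{-tA} v⟩, where g_s'(λ) = cos(s√λ) for λ ≥ 0 and cosh(s√(-λ)) for λ < 0, and e^{-tA} is defined by functional calculus. -/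
/-!
Writing `g_s'(λ) = cos(s w)` with `w² = λ` (so `w = i√(-λ)` when `λ < 0`), the scalar identity
`∫ γ_t(s) cos(s w) ds = e^{-t w²}` for the heat kernel `γ_t` is the Fourier transform of a Gaussian
at a complex frequency. On the spectrum, which lies in some `[-R, R]`, `|g_s'| ≤ e^{|s|√R}`; against
the Gaussian decay of `γ_t` this makes `s ↦ γ_t(s) g_s'` integrable in the sup norm, so the
continuous functional calculus commutes with the `s`-integral, and so does `B ↦ ⟪u, B v⟫`.
-/

open Real MeasureTheory

/-- The `s`-derivative of the wave function: `g_s'(λ) = cos(s√λ)` for `λ ≥ 0`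
and `cosh(s√(-λ))` for `λ < 0`. -/
noncomputable def waveG' (s lam : ℝ) : ℝ :=
  if 0 ≤ lam then Real.cos (s * Real.sqrt lam)
  else Real.cosh (s * Real.sqrt (-lam))

noncomputable def heatKernel (t s : ℝ) : ℝ :=
  (4 * π * t) ^ (-(1 : ℝ) / 2) * exp (-s ^ 2 / (4 * t))

theorem heatKernel_nonneg {t : ℝ} (ht : 0 ≤ t) (s : ℝ) : 0 ≤ heatKernel t s := by
  unfold heatKernel
  positivity

theorem continuous_heatKernel (t : ℝ) : Continuous (heatKernel t) := by
  unfold heatKernel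
  fun_prop

theorem Real.cosh_le_exp_abs (x : ℝ) : cosh x ≤ exp |x| := by
  rw [← cosh_abs, cosh_eq]
  linarith [exp_le_exp.mpr (show -|x| ≤ |x| by linarith [abs_nonneg x])]

theorem continuous_uncurry_waveG' : Continuous (Function.uncurry waveG') := by
  apply Continuous.if_le
  · fun_prop
  · fun_prop
  · exact continuous_const
  · exact continuous_snd
  · rintro ⟨s, lam⟩ (h : 0 = lam)
    simp [← h]

theorem continuous_waveG' (s : ℝ) : Continuous (waveG' s) :=
  continuous_uncurry_waveG'.comp (Continuous.prodMk_right s)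

theorem continuous_uncurry_heatKernel_mul_waveG' (t : ℝ) :
    Continuous (Function.uncurry fun s lam => heatKernel t s * waveG' s lam) :=
  (continuous_heatKernel t).comp continuous_fst |>.mul continuous_uncurry_waveG'

theorem abs_waveG'_le (s lam : ℝ) : |waveG' s lam| ≤ exp (|s| * √|lam|) := by
  unfold waveG'
  split_ifs with h
  · exact (abs_cos_le_one _).trans (one_le_exp (by positivity))
  · rw [abs_of_pos (cosh_pos _), abs_of_neg (not_le.mp h)]
    calc cosh (s * √(-lam)) ≤ exp |s * √(-lam)| := cosh_le_exp_abs _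
      _ = exp (|s| * √(-lam)) := by rw [abs_mul, abs_of_nonneg (sqrt_nonneg _)]

theorem exists_sq_eq_and_waveG'_eq_cos (lam : ℝ) :
    ∃ w : ℂ, w ^ 2 = lam ∧ ∀ s : ℝ, (waveG' s lam : ℂ) = Complex.cos (w * s) := by
  by_cases h : 0 ≤ lam
  · refine ⟨√lam, by norm_cast; exact sq_sqrt h, fun s => ?_⟩
    rw [waveG', if_pos h, mul_comm]
    push_cast
    rfl
  · refine ⟨√(-lam) * Complex.I, ?_, fun s => ?_⟩
    · rw [mul_pow, Complex.I_sq, ← Complex.ofReal_pow, sq_sqrt (by linarith)]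
      push_cast
      ring
    · rw [waveG', if_neg h, mul_right_comm, Complex.cos_mul_I, mul_comm s]
      push_cast
      rfl

theorem integrable_exp_neg_mul_sq_add_mul_abs {b : ℝ} (hb : 0 < b) (c : ℝ) :
    Integrable fun x : ℝ => exp (-b * x ^ 2 + c * |x|) := by
  have hquad (c : ℝ) : Integrable fun x : ℝ => exp (-b * x ^ 2 + c * x) := by
    refine (integrable_cexp_quadratic (b := b) (by simpa) c 0).norm.congr (.of_forall fun x => ?_)
    dsimp only
    rw [Complex.norm_exp, add_zero]
    norm_cast
  refine ((hquad c).add (hquad (-c))).mono' (by fun_prop) (.of_forall fun x => ?_)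
  rw [norm_of_nonneg (exp_pos _).le]
  show _ ≤ exp _ + exp _
  rcases abs_choice x with hx | hx <;> rw [hx]
  · exact le_add_of_nonneg_right (exp_pos _).le
  · rw [mul_neg, ← neg_mul]
    exact le_add_of_nonneg_left (exp_pos _).le

theorem integrable_heatKernel_mul_exp_mul_abs {t : ℝ} (ht : 0 < t) (c : ℝ) :
    Integrable fun s : ℝ => heatKernel t s * exp (c * |s|) := by
  refine ((integrable_exp_neg_mul_sq_add_mul_abs (b := 1 / (4 * t)) (by positivity) c).const_mul
    ((4 * π * t) ^ (-(1 : ℝ) / 2))).congr (.of_forall fun s => ?_)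
  simp only [heatKernel, mul_assoc, ← exp_add]
  ring_nf

theorem norm_heatKernel_mul_waveG'_le {t lam R : ℝ} (ht : 0 ≤ t) (s : ℝ) (hlam : |lam| ≤ R) :
    ‖heatKernel t s * waveG' s lam‖ ≤ heatKernel t s * exp (√R * |s|) := by
  rw [norm_mul, norm_of_nonneg (heatKernel_nonneg ht s), norm_eq_abs, mul_comm √R]
  exact mul_le_mul_of_nonneg_left ((abs_waveG'_le s lam).trans (by gcongr)) (heatKernel_nonneg ht s)

open Complex in
theorem integral_cexp_neg_mul_sq_mul_cos {b : ℂ} (hb : 0 < b.re) (w : ℂ) :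
    ∫ x : ℝ, cexp (-b * x ^ 2) * Complex.cos (w * x) =
      (π / b) ^ (1 / 2 : ℂ) * cexp (-w ^ 2 / (4 * b)) := by
  have hint (c : ℂ) : Integrable fun x : ℝ => cexp (I * c * x) * cexp (-b * x ^ 2) := by
    simpa only [← Complex.exp_add, add_zero, add_comm (I * c * _)] using
      integrable_cexp_quadratic hb (I * c) 0
  have hcos (x : ℝ) : cexp (-b * x ^ 2) * Complex.cos (w * x) =
      (cexp (I * w * x) * cexp (-b * x ^ 2) + cexp (I * (-w) * x) * cexp (-b * x ^ 2)) / 2 := by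
    rw [Complex.cos]
    ring_nf
  simp_rw [hcos]
  rw [integral_div, integral_add (hint w) (hint (-w)), fourierIntegral_gaussian hb,
    fourierIntegral_gaussian hb, neg_sq]
  ring

theorem integral_exp_neg_sq_div_mul_waveG' {t : ℝ} (ht : 0 < t) (lam : ℝ) :
    ∫ s : ℝ, exp (-s ^ 2 / (4 * t)) * waveG' s lam = √(4 * π * t) * exp (-(t * lam)) := by
  obtain ⟨w, hw, hcos⟩ := exists_sq_eq_and_waveG'_eq_cos lam
  have hb : 0 < (1 / (4 * t) : ℂ).re := by
    rw [show (1 / (4 * t) : ℂ) = ((1 / (4 * t) : ℝ) : ℂ) by push_cast; rfl, Complex.ofReal_re]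
    positivity
  have hsqrt : (π / (1 / (4 * t)) : ℂ) ^ (1 / 2 : ℂ) = (√(4 * π * t) : ℂ) := by
    rw [show (π / (1 / (4 * t)) : ℂ) = ((4 * π * t : ℝ) : ℂ) by push_cast; field_simp,
      show (1 / 2 : ℂ) = ((1 / 2 : ℝ) : ℂ) by push_cast; rfl,
      ← Complex.ofReal_cpow (by positivity), sqrt_eq_rpow]
  have hexp : -w ^ 2 / (4 * (1 / (4 * t))) = ((-(t * lam) : ℝ) : ℂ) := by
    rw [hw]
    push_cast
    field_simp
  apply Complex.ofReal_injective
  rw [← integral_complex_ofReal]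
  push_cast
  simp_rw [hcos]
  convert integral_cexp_neg_mul_sq_mul_cos hb w using 1
  · congr 1 with s
    rw [mul_comm (w : ℂ)]
    congr 2
    ring
  · rw [hsqrt, hexp]
    push_cast
    rfl

theorem integral_heatKernel_mul_waveG' {t : ℝ} (ht : 0 < t) (lam : ℝ) :
    ∫ s : ℝ, heatKernel t s * waveG' s lam = exp (-(t * lam)) := by
  simp_rw [heatKernel, mul_assoc ((4 * π * t) ^ (-(1 : ℝ) / 2))]
  rw [integral_const_mul, integral_exp_neg_sq_div_mul_waveG' ht, ← mul_assoc, sqrt_eq_rpow,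
    ← rpow_add (by positivity)]
  norm_num

section CFC

variable {𝒜 : Type*} [NormedRing 𝒜] [NormedAlgebra ℝ 𝒜] [CompleteSpace 𝒜] {t : ℝ}

theorem norm_heatKernel_mul_waveG'_le_of_mem_spectrum (ht : 0 ≤ t) (a : 𝒜) (s : ℝ) :
    ∀ lam ∈ spectrum ℝ a, ‖heatKernel t s * waveG' s lam‖ ≤
      heatKernel t s * exp (√(‖a‖ * ‖(1 : 𝒜)‖) * |s|) :=
  fun _ hlam => norm_heatKernel_mul_waveG'_le ht s (spectrum.norm_le_norm_mul_of_mem hlam)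

variable {p : 𝒜 → Prop} [StarRing 𝒜] [ContinuousFunctionalCalculus ℝ 𝒜 p]

theorem integrable_cfc_heatKernel_mul_waveG' (ht : 0 < t) (a : 𝒜) (ha : p a := by cfc_tac) :
    Integrable fun s => cfc (fun lam => heatKernel t s * waveG' s lam) a :=
  integrable_cfc _ _ a (continuous_uncurry_heatKernel_mul_waveG' t).continuousOn
    (.of_forall (norm_heatKernel_mul_waveG'_le_of_mem_spectrum ht.le a))
    (integrable_heatKernel_mul_exp_mul_abs ht _).hasFiniteIntegral ha

theorem integral_cfc_heatKernel_mul_waveG' (ht : 0 < t) (a : 𝒜)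
    (ha : p a := by cfc_tac) :
    ∫ s, cfc (fun lam => heatKernel t s * waveG' s lam) a = cfc (fun lam => exp (-(t * lam))) a := by
  rw [← cfc_integral _ _ a (continuous_uncurry_heatKernel_mul_waveG' t).continuousOn
    (.of_forall (norm_heatKernel_mul_waveG'_le_of_mem_spectrum ht.le a))
    (integrable_heatKernel_mul_exp_mul_abs ht _).hasFiniteIntegral ha]
  simp_rw [integral_heatKernel_mul_waveG' ht]

end CFC

theorem transmutation_formula_general {H : Type*} [NormedAddCommGroup H]
    [InnerProductSpace ℂ H] [CompleteSpace H] (A : H →L[ℂ] H)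
    (hA : IsSelfAdjoint A)
    (u v : H) (t : ℝ) (ht : 0 < t) :
    ∫ s : ℝ, ((4 * π * t) ^ (-(1 : ℝ) / 2) * Real.exp (-s ^ 2 / (4 * t))) •
        (inner ℂ u (cfc (waveG' s) A v) : ℂ)
      = (inner ℂ u (cfc (fun lam : ℝ => Real.exp (-(t * lam))) A v) : ℂ) := by
  let L : (H →L[ℂ] H) →L[ℂ] ℂ := (innerSL ℂ u).comp (ContinuousLinearMap.apply ℂ H v)
  have hL (s : ℝ) : heatKernel t s • inner ℂ u (cfc (waveG' s) A v) =
      L (cfc (fun lam => heatKernel t s * waveG' s lam) A) := by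
    rw [cfc_const_mul (heatKernel t s) (waveG' s) A (continuous_waveG' s).continuousOn]
    simp only [L, ContinuousLinearMap.comp_apply, ContinuousLinearMap.apply_apply,
      ContinuousLinearMap.map_smul_of_tower, coe_innerSL_apply]
  calc _ = ∫ s, L (cfc (fun lam => heatKernel t s * waveG' s lam) A) :=
        integral_congr_ae (.of_forall hL)
    _ = L (∫ s, cfc (fun lam => heatKernel t s * waveG' s lam) A) :=
        L.integral_comp_comm (integrable_cfc_heatKernel_mul_waveG' ht A hA)
    _ = _ := by rw [integral_cfc_heatKernel_mul_waveG' ht A hA]; rfl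

/-- Transmutation formula: the heat semigroup of a semibounded self-adjoint
operator is the Gaussian average of the wave group. -/
theorem transmutation_formula {H : Type*} [NormedAddCommGroup H]
    [InnerProductSpace ℂ H] [CompleteSpace H] (A : H →L[ℂ] H)
    (hA : IsSelfAdjoint A) (ω : ℝ) (hspec : spectrum ℝ A ⊆ Set.Ici ω)
    (u v : H) (t : ℝ) (ht : 0 < t) :
    ∫ s : ℝ, ((4 * π * t) ^ (-(1 : ℝ) / 2) * Real.exp (-s ^ 2 / (4 * t))) •
        (inner ℂ u (cfc (waveG' s) A v) : ℂ)
      = (inner ℂ u (cfc (fun lam : ℝ => Real.exp (-(t * lam))) A v) : ℂ) :=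
  transmutation_formula_general A hA u v t ht
end
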